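/- arXiv:1709.09476 — 8 statements merged into one kernel-verified Lean document; each statement's English description precedes it below -/
import Mathlib

section
/- Let L ⊂ ℂ⁴ be a 2-dimensional ℂ-linear subspace such that every (x₀,x₁,x₂,x₃) ∈ L satisfies x₀(x₁²+x₂²) = x₃³. Then L is one of the following three subspaces: {x₃ = 0, x₁ − i x₂ = 0}, {x₃ = 0, x₁ + i x₂ = 0}, or {x₃ = 0, x₀ = 0}. Equivalently, the only lines contained in the cubic surface V over ℂ are ℓ₁ = {x₃ = x₁ − i x₂ = 0}, ℓ₂ = {x₃ = x₁ + i x₂ = 0} and ℓ₃ = {x₃ = x₀ = 0}. -/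
/-!
If `x₃` did not vanish on a plane `L ⊆ V`, pick `a, b ∈ L` with `a₃ = 0 ≠ b₃`. Comparing
coefficients in `F(s a + t b) = (t b₃)³` forces `a₀ = 0`, `a₁² + a₂² = 0` and `a₁b₁ + a₂b₂ = 0`
while `b₁² + b₂² ≠ 0`, hence `a = 0`; so `L` would be the line through `b`. Thus `L ⊆ {x₃ = 0}`,
where the equation reads `x₀ (x₁ - i x₂) (x₁ + i x₂) = 0`. A subspace covered by three
hyperplanes lies in one of them, and counting dimensions identifies `L` with the
corresponding line.
-/
open Complex Module Submodule

theorem Submodule.exists_le_of_coe_subset_iUnion {k E ι : Type*} [DivisionRing k] [Infinite k]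
    [AddCommGroup E] [Module k E] [Finite ι] {L : Submodule k E} {p : ι → Submodule k E}
    (h : (L : Set E) ⊆ ⋃ i, (p i : Set E)) : ∃ i, L ≤ p i := by
  obtain ⟨i, hi⟩ := Subspace.exists_eq_top_of_iUnion_eq_univ (p := fun i ↦ (p i).comap L.subtype)
    (Set.eq_univ_of_forall fun x ↦ by simpa using h x.2)
  exact ⟨i, comap_subtype_eq_top.mp hi⟩

theorem Submodule.eq_of_le_of_le_span_pair {K V : Type*} [Field K] [AddCommGroup V] [Module K V]
    {L M : Submodule K V} (hL : finrank K L = 2) (hLM : L ≤ M) {w₁ w₂ : V}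
    (hM : M ≤ span K {w₁, w₂}) : L = M := by
  classical
  have := FiniteDimensional.span_of_finite K (Set.toFinite {w₁, w₂})
  have hspan : finrank K (span K {w₁, w₂}) ≤ 2 :=
    (finrank_span_le_card ({w₁, w₂} : Set V)).trans (by simpa using Finset.card_le_two)
  have hL_eq : L = span K {w₁, w₂} := eq_of_le_of_finrank_le (hLM.trans hM) (hL ▸ hspan)
  exact le_antisymm hLM (hL_eq ▸ hM)

theorem Submodule.coe_eq_setOf_of_le_ker_of_le_ker {K V : Type*} [Field K] [AddCommGroup V]
    [Module K V] {L : Submodule K V} (hL : finrank K L = 2) {f g : V →ₗ[K] K}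
    (hf : L ≤ LinearMap.ker f) (hg : L ≤ LinearMap.ker g) (w₁ w₂ : V)
    (hspan : ∀ x, f x = 0 → g x = 0 → ∃ a b : K, a • w₁ + b • w₂ = x) :
    (L : Set V) = {x | f x = 0 ∧ g x = 0} := by
  rw [eq_of_le_of_le_span_pair hL (le_inf hf hg) fun x ⟨hfx, hgx⟩ ↦
    mem_span_pair.mpr (hspan x hfx hgx)]
  rfl

theorem eq_zero_of_sq_add_sq_eq_zero_of_mul_add_mul_eq_zero {R : Type*} [CommRing R] [IsDomain R]
    {a₁ a₂ b₁ b₂ : R} (ha : a₁ ^ 2 + a₂ ^ 2 = 0) (hab : a₁ * b₁ + a₂ * b₂ = 0)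
    (hb : b₁ ^ 2 + b₂ ^ 2 ≠ 0) : a₁ = 0 ∧ a₂ = 0 := by
  -- Lagrange's identity: `(a₁² + a₂²)(b₁² + b₂²) = (a₁b₁ + a₂b₂)² + (a₁b₂ - a₂b₁)²`
  have hcross : a₁ * b₂ = a₂ * b₁ := by
    have : (a₁ * b₂ - a₂ * b₁) ^ 2 = 0 := by
      linear_combination (b₁ ^ 2 + b₂ ^ 2) * ha - (a₁ * b₁ + a₂ * b₂) * hab
    exact sub_eq_zero.mp (pow_eq_zero_iff two_ne_zero |>.mp this)
  constructor
  · refine (mul_eq_zero.mp (?_ : a₁ * (b₁ ^ 2 + b₂ ^ 2) = 0)).resolve_right hb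
    linear_combination b₁ * hab + b₂ * hcross
  · refine (mul_eq_zero.mp (?_ : a₂ * (b₁ ^ 2 + b₂ ^ 2) = 0)).resolve_right hb
    linear_combination b₂ * hab - b₁ * hcross

def cubicSurface : Set (Fin 4 → ℂ) := {x | x 0 * (x 1 ^ 2 + x 2 ^ 2) = x 3 ^ 3}

theorem eq_zero_of_forall_smul_add_smul_mem_cubicSurface {a b : Fin 4 → ℂ} (ha : a 3 = 0)
    (hb : b 3 ≠ 0) (h : ∀ s t : ℂ, s • a + t • b ∈ cubicSurface) : a = 0 := by
  have hst (s t : ℂ) := h s t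
  simp only [cubicSurface, Set.mem_ofPred_eq, Pi.add_apply, Pi.smul_apply, smul_eq_mul, ha]
    at hst
  -- the coefficients of `s³`, `s²t`, `st²` and `t³`
  have e₁ : a 0 * (a 1 ^ 2 + a 2 ^ 2) = 0 := by linear_combination hst 1 0
  have e₂ : b 0 * (a 1 ^ 2 + a 2 ^ 2) + 2 * a 0 * (a 1 * b 1 + a 2 * b 2) = 0 := by
    linear_combination (hst 1 1 - hst 1 (-1)) / 2 - hst 0 1
  have e₃ : a 0 * (b 1 ^ 2 + b 2 ^ 2) + 2 * b 0 * (a 1 * b 1 + a 2 * b 2) = 0 := by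
    linear_combination (hst 1 1 + hst 1 (-1)) / 2 - hst 1 0
  have e₄ : b 0 * (b 1 ^ 2 + b 2 ^ 2) = b 3 ^ 3 := by linear_combination hst 0 1
  have hb₀ : b 0 ≠ 0 := left_ne_zero_of_mul (e₄ ▸ pow_ne_zero 3 hb)
  have hqb : b 1 ^ 2 + b 2 ^ 2 ≠ 0 := right_ne_zero_of_mul (e₄ ▸ pow_ne_zero 3 hb)
  have hqa : a 1 ^ 2 + a 2 ^ 2 = 0 := by
    by_cases ha₀ : a 0 = 0
    · simpa [ha₀, hb₀] using e₂
    · simpa [ha₀] using e₁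
  have ha₀ : a 0 = 0 := by
    have : a 0 ^ 2 * (b 1 ^ 2 + b 2 ^ 2) = 0 := by
      linear_combination a 0 * e₃ - b 0 * e₂ + b 0 ^ 2 * hqa
    simpa [hqb] using this
  have hab : a 1 * b 1 + a 2 * b 2 = 0 := by simpa [ha₀, hb₀] using e₃
  obtain ⟨ha₁, ha₂⟩ := eq_zero_of_sq_add_sq_eq_zero_of_mul_add_mul_eq_zero hqa hab hqb
  ext i
  fin_cases i <;> assumption

theorem coord_three_eq_zero_of_coe_subset_cubicSurface {L : Submodule ℂ (Fin 4 → ℂ)}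
    (hrank : finrank ℂ L = 2) (hL : (L : Set (Fin 4 → ℂ)) ⊆ cubicSurface) :
    ∀ x ∈ L, x 3 = 0 := by
  by_contra! ⟨b, hbL, hb⟩
  have hLb : L ≤ ℂ ∙ b := fun x hx ↦ by
    have hx' : x - (x 3 / b 3) • b = 0 :=
      eq_zero_of_forall_smul_add_smul_mem_cubicSurface (by simp [hb]) hb fun s t ↦
        hL (L.add_mem (L.smul_mem s (L.sub_mem hx (L.smul_mem _ hbL))) (L.smul_mem t hbL))
    exact mem_span_singleton.mpr ⟨x 3 / b 3, (sub_eq_zero.mp hx').symm⟩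
  have := (finrank_mono hLb).trans (by simpa using finrank_span_le_card (R := ℂ) ({b} : Set _))
  omega

/-- The only lines contained in the cubic surface `x₀(x₁²+x₂²) = x₃³` over `ℂ` are
`ℓ₁ = {x₃ = x₁ - i x₂ = 0}`, `ℓ₂ = {x₃ = x₁ + i x₂ = 0}` and `ℓ₃ = {x₃ = x₀ = 0}`. -/
theorem lines_on_cubic_surface (L : Submodule ℂ (Fin 4 → ℂ))
    (hrank : Module.finrank ℂ L = 2)
    (hsub : ∀ x ∈ L, x 0 * (x 1 ^ 2 + x 2 ^ 2) = x 3 ^ 3) :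
    (L : Set (Fin 4 → ℂ)) = {x | x 3 = 0 ∧ x 1 - I * x 2 = 0} ∨
    (L : Set (Fin 4 → ℂ)) = {x | x 3 = 0 ∧ x 1 + I * x 2 = 0} ∨
    (L : Set (Fin 4 → ℂ)) = {x | x 3 = 0 ∧ x 0 = 0} := by
  have h₃ : L ≤ LinearMap.ker (LinearMap.proj 3) :=
    coord_three_eq_zero_of_coe_subset_cubicSurface hrank hsub
  let φ : Fin 3 → (Fin 4 → ℂ) →ₗ[ℂ] ℂ :=
    ![.proj 1 - I • .proj 2, .proj 1 + I • .proj 2, .proj 0]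
  obtain ⟨i, hi⟩ : ∃ i, L ≤ LinearMap.ker (φ i) := exists_le_of_coe_subset_iUnion fun x hx ↦ by
    have hx₃ : x 3 = 0 := h₃ hx
    have : ((x 1 - I * x 2) * (x 1 + I * x 2)) * x 0 = 0 := by
      linear_combination hsub x hx - x 0 * x 2 ^ 2 * I_sq + x 3 ^ 2 * hx₃
    simpa [φ, Fin.exists_fin_succ, or_assoc] using this
  have hline := coe_eq_setOf_of_le_ker_of_le_ker hrank h₃ hi
  fin_cases i
  · refine .inl ((hline ![1, 0, 0, 0] ![0, I, 1, 0]
      fun x (hx₃ : x 3 = 0) hx ↦ ⟨x 0, x 2, ?_⟩).trans ?_)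
    · ext j; fin_cases j <;> simp [φ, hx₃] at hx ⊢; linear_combination -hx
    · simp [φ]
  · refine .inr (.inl ((hline ![1, 0, 0, 0] ![0, -I, 1, 0]
      fun x (hx₃ : x 3 = 0) hx ↦ ⟨x 0, x 2, ?_⟩).trans ?_))
    · ext j; fin_cases j <;> simp [φ, hx₃] at hx ⊢; linear_combination -hx
    · simp [φ]
  · refine .inr (.inr ((hline ![0, 1, 0, 0] ![0, 0, 1, 0]
      fun x (hx₃ : x 3 = 0) hx ↦ ⟨x 1, x 2, ?_⟩).trans ?_))
    · ext j; fin_cases j <;> simp [φ, hx₃] at hx ⊢; linear_combination -hx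
    · simp [φ]
end

section
/- One has (∫₀¹ (1−z₃)² dz₃) × (1/2) × meas{(z₁,z₄) ∈ ℝ²_{≥0} : 3z₁ ≤ 1 and 2z₄ − z₁ ≤ 1} = 7/216, where meas denotes the 2-dimensional Lebesgue measure. Equivalently, (1/6)·∫₀^{1/3} (1+z₁)/2 dz₁ = 7/216. -/
/-!
The polytope is the region between `0` and `(1 + z₁) / 2` over `z₁ ∈ [0, 1/3]`, so by
Cavalieri's principle its area is `∫₀^{1/3} (1 + z₁) / 2 = 7/36`; with `∫₀¹ (1 - z)² = 1/3`
both products equal `7/216`.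
-/

open Real MeasureTheory intervalIntegral

open Set

section RegionBetweenClosed

variable {α : Type*} [MeasurableSpace α] {μ : Measure α} {f g : α → ℝ} {s : Set α}

theorem volume_region_between_cc_eq_lintegral (hf : Measurable f) (hg : Measurable g)
    (hs : MeasurableSet s) :
    μ.prod volume {p : α × ℝ | p.1 ∈ s ∧ p.2 ∈ Icc (f p.1) (g p.1)} =
      ∫⁻ y in s, ENNReal.ofReal (g y - f y) ∂μ := by
  classical
  rw [Measure.prod_apply (measurableSet_region_between_cc hf hg hs),
    ← lintegral_indicator hs]
  congr 1 with x
  by_cases hx : x ∈ s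
  · simp only [preimage_ofPred_eq, hx, true_and, ofPred_mem_eq, Real.volume_Icc,
      indicator_of_mem]
  · simp [hx]

theorem volume_region_between_cc_eq_integral (hf : Measurable f) (hg : Measurable g)
    (hs : MeasurableSet s) (hint : IntegrableOn (fun y ↦ g y - f y) s μ)
    (hfg : ∀ x ∈ s, f x ≤ g x) :
    μ.prod volume {p : α × ℝ | p.1 ∈ s ∧ p.2 ∈ Icc (f p.1) (g p.1)} =
      ENNReal.ofReal (∫ y in s, g y - f y ∂μ) := by
  rw [volume_region_between_cc_eq_lintegral hf hg hs, ofReal_integral_eq_lintegral_ofReal hint]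
  filter_upwards [ae_restrict_mem hs] with x hx using sub_nonneg.2 (hfg x hx)

end RegionBetweenClosed

lemma integral_one_sub_sq : ∫ z in (0 : ℝ)..1, (1 - z) ^ 2 = 1 / 3 := by
  norm_num [integral_comp_sub_left (fun z : ℝ ↦ z ^ 2)]

lemma integral_one_add_div_two : ∫ z in (0 : ℝ)..(1 / 3), (1 + z) / 2 = 7 / 36 := by
  norm_num [intervalIntegral.integral_div, integral_comp_add_left (fun z : ℝ ↦ z)]

lemma polytope_eq_region_between :
    {p : ℝ × ℝ | 0 ≤ p.1 ∧ 0 ≤ p.2 ∧ 3 * p.1 ≤ 1 ∧ 2 * p.2 - p.1 ≤ 1} =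
      {p : ℝ × ℝ | p.1 ∈ Icc 0 (1 / 3) ∧ p.2 ∈ Icc 0 ((1 + p.1) / 2)} := by
  ext ⟨x, y⟩
  simp only [mem_ofPred_eq, mem_Icc]
  constructor
  · rintro ⟨hx, hy, hx3, hxy⟩
    exact ⟨⟨hx, by linarith⟩, hy, by linarith⟩
  · rintro ⟨⟨hx, hx3⟩, hy, hxy⟩
    exact ⟨hx, hy, by linarith, by linarith⟩

lemma volume_polytope :
    volume {p : ℝ × ℝ | 0 ≤ p.1 ∧ 0 ≤ p.2 ∧ 3 * p.1 ≤ 1 ∧ 2 * p.2 - p.1 ≤ 1} =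
      ENNReal.ofReal (7 / 36) := by
  have hint : IntegrableOn (fun x : ℝ ↦ (1 + x) / 2 - 0) (Icc 0 (1 / 3)) :=
    (by fun_prop : Continuous fun x : ℝ ↦ (1 + x) / 2 - 0).integrableOn_Icc
  rw [polytope_eq_region_between, Measure.volume_eq_prod,
    volume_region_between_cc_eq_integral measurable_const (by fun_prop) measurableSet_Icc hint
      (fun x hx ↦ by linarith [hx.1]),
    integral_Icc_eq_integral_Ioc, ← intervalIntegral.integral_of_le (by norm_num)]
  simp only [sub_zero, integral_one_add_div_two]

/-- The effective-cone constant computation `α(Ṽ) = 7/216` as an explicit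
polytope-volume computation. -/
theorem alpha_constant :
    ((∫ z in (0 : ℝ)..1, (1 - z) ^ 2) * (1 / 2) *
      (volume {p : ℝ × ℝ | 0 ≤ p.1 ∧ 0 ≤ p.2 ∧ 3 * p.1 ≤ 1 ∧ 2 * p.2 - p.1 ≤ 1}).toReal
        = 7 / 216) ∧
    ((1 / 6 : ℝ) * ∫ z in (0 : ℝ)..(1 / 3), (1 + z) / 2) = 7 / 216 := by
  rw [integral_one_sub_sq, volume_polytope, ENNReal.toReal_ofReal (by norm_num),
    integral_one_add_div_two]
  norm_num
end

section
/- Let χ be the nonprincipal Dirichlet character modulo 4. Then lim_{s→1⁺} (s−1)⁴ · ∏_{p odd prime} (1 − p^{−s})^{−4} (1 − χ(p) p^{−s})^{−3} = L(1,χ)³ / 2⁴ = (1/16)·(π/4)³, where for real s > 1 the product ∏_{p>2} (1 − p^{−s})^{−4} (1 − χ(p) p^{−s})^{−3} converges. -/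
/-!
Over the odd primes the Euler product factors as `((1 - 2^{-s}) ζ(s))⁴ L(s, χ)³`, by the Euler
products of `ζ` and of `L(s, χ)` with the factor at `2` removed. As `s → 1⁺`,
`(s - 1) ζ(s) → 1` and `1 - 2^{-s} → 1/2`, while `L(s, χ) = ∑ₖ (-1)ᵏ (2k+1)^{-s}` tends to
Leibniz's series `π/4`.
-/

open Filter Real

/-- The nonprincipal Dirichlet character modulo 4, evaluated at a natural number. -/
noncomputable def chi (n : ℕ) : ℝ :=
  if n % 4 = 1 then 1 else if n % 4 = 3 then -1 else 0

/-- The Euler factor at an odd prime `p` of the partial Artin L-function. -/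
noncomputable def eulerFactor (s : ℝ) (p : ℕ) : ℝ :=
  ((1 - (p : ℝ) ^ (-s)) ^ 4)⁻¹ * ((1 - chi p * (p : ℝ) ^ (-s)) ^ 3)⁻¹

open Topology

namespace DirichletCharacter

variable {N : ℕ}

noncomputable def realSummandHom (χ : DirichletCharacter ℝ N) {s : ℝ} (hs : s ≠ 0) :
    ℕ →*₀ ℝ where
  -- `hs` makes `(0 : ℝ) ^ (-s) = 0`, which is needed at level one, where `χ 0 = 1`.
  toFun n := χ n * (n : ℝ) ^ (-s)
  map_zero' := by simp [Real.zero_rpow (neg_ne_zero.mpr hs)]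
  map_one' := by simp
  map_mul' m n := by
    push_cast
    rw [map_mul, Real.mul_rpow (Nat.cast_nonneg m) (Nat.cast_nonneg n)]
    ring

theorem realLSeries_eulerProduct_hasProd (χ : DirichletCharacter ℝ N) {s : ℝ} (hs : 1 < s) :
    HasProd (fun p : Nat.Primes => (1 - χ p * (p : ℝ) ^ (-s))⁻¹)
      (∑' n : ℕ, χ n * (n : ℝ) ^ (-s)) := by
  refine EulerProduct.eulerProduct_completely_multiplicative_hasProd
    (f := realSummandHom χ (by positivity)) ?_
  refine (Real.summable_nat_rpow.mpr (neg_lt_neg hs)).of_nonneg_of_le (fun _ => norm_nonneg _)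
    fun n => ?_
  simp only [realSummandHom, MonoidWithZeroHom.coe_mk, ZeroHom.coe_mk, norm_mul,
    Real.norm_of_nonneg (Real.rpow_nonneg n.cast_nonneg _)]
  exact mul_le_of_le_one_left (by positivity) (χ.norm_le_one _)

end DirichletCharacter

theorem HasProd.compl_singleton {α β : Type*} [CommGroupWithZero α] [TopologicalSpace α]
    [ContinuousMul α]
    {f : β → α} {a : α} (hf : HasProd f a) (b : β) (hb : f b ≠ 0) :
    HasProd (f ∘ (↑) : ({b}ᶜ : Set β) → α) (a / f b) := by
  classical
  rw [hasProd_subtype_iff_mulIndicator, div_eq_mul_inv]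
  convert hf.mul (hasProd_pi_single b (f b)⁻¹) using 1
  ext x
  by_cases hx : x = b
  · subst hx; simp [hb]
  · simp [hx]

theorem hasProd_oddPrimes {α : Type*} [CommGroupWithZero α] [TopologicalSpace α]
    [ContinuousMul α] {f : ℕ → α} {a : α} (hf : HasProd (fun p : Nat.Primes => f p) a)
    (h2 : f 2 ≠ 0) : HasProd (fun p : {p : ℕ // p.Prime ∧ p ≠ 2} => f p) (a / f 2) := by
  let e : {p : ℕ // p.Prime ∧ p ≠ 2} ≃ ({⟨2, Nat.prime_two⟩}ᶜ : Set Nat.Primes) :=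
    (Equiv.subtypeSubtypeEquivSubtypeInter _ (· ≠ 2)).symm.trans
      (Equiv.subtypeEquivRight fun _ =>
        (Subtype.ext_iff (a2 := ⟨2, Nat.prime_two⟩)).not.symm)
  exact e.hasProd_iff.mpr (hf.compl_singleton ⟨2, Nat.prime_two⟩ h2)

noncomputable def chi4 : DirichletCharacter ℝ 4 := ZMod.χ₄.ringHomComp (Int.castRingHom ℝ)

theorem chi4_natCast (n : ℕ) : chi4 n = chi n := by
  have hmod : n % 2 = n % 4 % 2 := (Nat.mod_mod_of_dvd n (by norm_num)).symm
  simp only [chi4, MulChar.ringHomComp_apply, ZMod.χ₄_nat_eq_if_mod_four, chi, hmod]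
  have : n % 4 < 4 := Nat.mod_lt n (by norm_num)
  interval_cases n % 4 <;> simp

theorem chi_two_mul (k : ℕ) : chi (2 * k) = 0 := by
  have : 2 * k % 4 = 0 ∨ 2 * k % 4 = 2 := by omega
  rcases this with h | h <;> simp [chi, h]

theorem chi_two_mul_add_one (k : ℕ) : chi (2 * k + 1) = (-1) ^ k := by
  rw [← chi4_natCast, chi4, MulChar.ringHomComp_apply, ZMod.χ₄_eq_neg_one_pow (by omega)]
  simp [Nat.mul_add_div two_pos]

theorem injective_two_mul_add_one : Function.Injective (fun k : ℕ => 2 * k + 1) :=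
  fun a b h => by simpa using h

theorem tsum_chi_mul_rpow_neg (s : ℝ) :
    ∑' n : ℕ, chi n * (n : ℝ) ^ (-s) = ∑' k : ℕ, (-1) ^ k * (2 * (k : ℝ) + 1) ^ (-s) := by
  have hodd : Function.support (fun n : ℕ => chi n * (n : ℝ) ^ (-s)) ⊆
      Set.range (fun k => 2 * k + 1) := by
    intro n hn
    obtain ⟨k, rfl | rfl⟩ := Nat.even_or_odd' n
    · simp [chi_two_mul] at hn
    · exact ⟨k, rfl⟩
  rw [← injective_two_mul_add_one.tsum_eq hodd]
  simp [chi_two_mul_add_one]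

theorem antitone_rpow_neg_two_mul_add_one {s : ℝ} (hs : 0 ≤ s) :
    Antitone (fun k : ℕ => (2 * (k : ℝ) + 1) ^ (-s)) := fun a b hab =>
  Real.rpow_le_rpow_of_nonpos (by positivity) (by gcongr) (neg_nonpos.mpr hs)

theorem summable_rpow_neg_two_mul_add_one {s : ℝ} (hs : 1 < s) :
    Summable (fun k : ℕ => (2 * (k : ℝ) + 1) ^ (-s)) := by
  have := (Real.summable_nat_rpow.mpr (neg_lt_neg hs)).comp_injective
    injective_two_mul_add_one
  simpa [Function.comp_def] using this

theorem abs_tsum_alternating_rpow_sub_sum_le {s : ℝ} (hs : 1 < s) (N : ℕ) :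
    |∑' k : ℕ, (-1) ^ k * (2 * (k : ℝ) + 1) ^ (-s) -
      ∑ k ∈ Finset.range N, (-1) ^ k * (2 * (k : ℝ) + 1) ^ (-s)| ≤ (2 * (N : ℝ) + 1)⁻¹ := by
  refine (alternating_series_error_bound _ (antitone_rpow_neg_two_mul_add_one (by positivity))
    (summable_rpow_neg_two_mul_add_one hs) N).trans ?_
  rw [← Real.rpow_neg_one]
  exact Real.rpow_le_rpow_of_exponent_le (by linarith [N.cast_nonneg (α := ℝ)]) (by linarith)

theorem tendsto_tsum_alternating_rpow :
    Tendsto (fun s : ℝ => ∑' k : ℕ, (-1) ^ k * (2 * (k : ℝ) + 1) ^ (-s))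
      (𝓝[>] 1) (𝓝 (π / 4)) := by
  -- The alternating error bound is uniform in `s > 1`, so the limit may be taken termwise.
  set S : ℕ → ℝ → ℝ := fun N s => ∑ k ∈ Finset.range N, (-1) ^ k * (2 * (k : ℝ) + 1) ^ (-s)
  have hunif : TendstoUniformlyOn S (fun s => ∑' k : ℕ, (-1) ^ k * (2 * (k : ℝ) + 1) ^ (-s))
      atTop (Set.Ioi 1) := by
    have hnull : Tendsto (fun N : ℕ => (2 * (N : ℝ) + 1)⁻¹) atTop (𝓝 0) :=
      tendsto_inv_atTop_zero.comp <| tendsto_atTop_add_const_right _ 1 <|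
        tendsto_natCast_atTop_atTop.const_mul_atTop two_pos
    refine Metric.tendstoUniformlyOn_iff.mpr fun ε hε => ?_
    filter_upwards [hnull.eventually (gt_mem_nhds hε)] with N hN s hs
    exact (Real.dist_eq _ _ ▸ abs_tsum_alternating_rpow_sub_sum_le hs N).trans_lt hN
  have hcont : ∀ N, Tendsto (S N) (𝓝[>] 1) (𝓝 (S N 1)) := fun N =>
    ((by fun_prop (disch := positivity) : Continuous (S N)).tendsto 1).mono_left
      nhdsWithin_le_nhds
  have hleibniz : Tendsto (fun N => S N 1) atTop (𝓝 (π / 4)) := by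
    simpa [S, Real.rpow_neg_one, div_eq_mul_inv] using Real.tendsto_sum_pi_div_four
  exact (hunif.tendstoUniformlyOnFilter.mono_right inf_le_right
    ).tendsto_of_eventually_tendsto (Eventually.of_forall hcont) hleibniz

theorem hasProd_oddPrimes_zeta {s : ℝ} (hs : 1 < s) :
    HasProd (fun p : {p : ℕ // p.Prime ∧ p ≠ 2} => (1 - (p : ℝ) ^ (-s))⁻¹)
      ((1 - (2 : ℝ) ^ (-s)) * ∑' n : ℕ, (n : ℝ) ^ (-s)) := by
  have h := (1 : DirichletCharacter ℝ 1).realLSeries_eulerProduct_hasProd hs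
  simp only [MulChar.one_apply (isUnit_of_subsingleton _), one_mul] at h
  have h2 : (1 - (2 : ℝ) ^ (-s))⁻¹ ≠ 0 := inv_ne_zero <| sub_ne_zero.mpr
    (Real.rpow_lt_one_of_one_lt_of_neg one_lt_two (by linarith)).ne'
  simpa [mul_comm] using hasProd_oddPrimes h (f := fun n => (1 - (n : ℝ) ^ (-s))⁻¹) h2

theorem hasProd_oddPrimes_chi {s : ℝ} (hs : 1 < s) :
    HasProd (fun p : {p : ℕ // p.Prime ∧ p ≠ 2} => (1 - chi p * (p : ℝ) ^ (-s))⁻¹)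
      (∑' n : ℕ, chi n * (n : ℝ) ^ (-s)) := by
  have h := chi4.realLSeries_eulerProduct_hasProd hs
  simp only [chi4_natCast] at h
  simpa [chi] using
    hasProd_oddPrimes h (f := fun n => (1 - chi n * (n : ℝ) ^ (-s))⁻¹) (by simp [chi])

theorem hasProd_eulerFactor {s : ℝ} (hs : 1 < s) :
    HasProd (fun p : {p : ℕ // p.Prime ∧ p ≠ 2} => eulerFactor s p)
      (((1 - (2 : ℝ) ^ (-s)) * ∑' n : ℕ, (n : ℝ) ^ (-s)) ^ 4 *
        (∑' n : ℕ, chi n * (n : ℝ) ^ (-s)) ^ 3) := by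
  simpa only [eulerFactor, inv_pow] using
    ((hasProd_oddPrimes_zeta hs).pow 4).mul ((hasProd_oddPrimes_chi hs).pow 3)

/-- The partial Artin L-function `∏_{p>2} (1-p^{-s})^{-4}(1-χ(p)p^{-s})^{-3}` converges for
real `s > 1` and `(s-1)⁴` times it tends to `L(1,χ)³/2⁴ = (1/16)(π/4)³` as `s → 1⁺`. -/
theorem artin_L_function_pole :
    (∀ s : ℝ, 1 < s →
      Multipliable (fun p : {p : ℕ // p.Prime ∧ p ≠ 2} => eulerFactor s p)) ∧
    Tendsto
      (fun s : ℝ => (s - 1) ^ 4 *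
        ∏' p : {p : ℕ // p.Prime ∧ p ≠ 2}, eulerFactor s p)
      (nhdsWithin 1 (Set.Ioi 1)) (nhds ((π / 4) ^ 3 / 2 ^ 4)) := by
  refine ⟨fun s hs => (hasProd_eulerFactor hs).multipliable, ?_⟩
  have hzeta : Tendsto (fun s : ℝ => (s - 1) * ∑' n : ℕ, (n : ℝ) ^ (-s)) (𝓝[>] 1) (𝓝 1) := by
    simpa [Real.rpow_neg (Nat.cast_nonneg _)] using tendsto_sub_mul_tsum_nat_rpow
  have htwo : Tendsto (fun s : ℝ => 1 - (2 : ℝ) ^ (-s)) (𝓝[>] 1) (𝓝 (1 - 2⁻¹)) := by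
    have : Continuous (fun s : ℝ => 1 - (2 : ℝ) ^ (-s)) := by fun_prop (disch := norm_num)
    simpa [Real.rpow_neg_one] using (this.tendsto 1).mono_left nhdsWithin_le_nhds
  have hL : Tendsto (fun s : ℝ => ∑' n : ℕ, chi n * (n : ℝ) ^ (-s)) (𝓝[>] 1) (𝓝 (π / 4)) := by
    simpa only [tsum_chi_mul_rpow_neg] using tendsto_tsum_alternating_rpow
  have hlim := ((htwo.mul hzeta).pow 4).mul (hL.pow 3)
  rw [show ((1 - 2⁻¹) * 1) ^ 4 * (π / 4) ^ 3 = (π / 4) ^ 3 / 2 ^ 4 by ring] at hlim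
  refine hlim.congr' (eventually_mem_nhdsWithin.mono fun s (hs : 1 < s) => ?_)
  dsimp only
  rw [(hasProd_eulerFactor hs).tprod_eq]
  ring
end

section
/- Let N(2ⁿ) = #{(x₀,x₁,x₂,x₃) ∈ (ℤ/2ⁿℤ)⁴ : x₀(x₁²+x₂²) ≡ x₃³ (mod 2ⁿ)}. Then lim_{n→∞} N(2ⁿ)/2^{3n} = 2. -/
/-!
Write `M_c(n)` (`solCount c n` below) for the number of solutions of
`x₀(x₁² + x₂²) ≡ c·x₃³ (mod 2ⁿ)`, so that `N(2ⁿ) = M_1(n)`. Split `x₁, x₂` modulo `2ⁿ⁺²` by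
parity. If exactly one of them is odd, `x₁² + x₂²` is a unit and `x₀` is unique; if both are odd,
`x₁² + x₂²` is twice a unit and there are two choices of `x₀` or none, according to the parity of
`c·x₃³`; if both are even, dividing the congruence by `4` lands at level `n` with `c = 4` becoming
`1`, and `c = 1, 2` becoming `2c` (where `x₃` must be even). Hence
`M_4(n+2) = 2^(3n+6) + 64 M_1(n)`, `M_2(n+2) = 2^(3n+6) + 32 M_4(n)` and
`M_1(n+2) = 3·2^(3n+4) + 32 M_2(n)`, so the densities `rₙ = N(2ⁿ)/2³ⁿ` satisfy
`r_{n+6} - 2 = (rₙ - 2)/4`.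
-/
open Filter

/-- The number of solutions of `x₀(x₁²+x₂²) ≡ x₃³ (mod 2ⁿ)`. -/
noncomputable def N2 (n : ℕ) : ℕ :=
  Nat.card {x : ZMod (2 ^ n) × ZMod (2 ^ n) × ZMod (2 ^ n) × ZMod (2 ^ n) //
    x.1 * (x.2.1 ^ 2 + x.2.2.1 ^ 2) = x.2.2.2 ^ 3}

open Finset Function

theorem Function.Periodic.sum_range_mul {M : Type*} [AddCommMonoid M] {g : ℕ → M} {m : ℕ}
    (hg : Periodic g m) (k : ℕ) : ∑ a ∈ range (k * m), g a = k • ∑ a ∈ range m, g a := by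
  induction k with
  | zero => simp
  | succ k ih =>
    rw [succ_nsmul, Nat.succ_mul, sum_range_add, ih]
    congr 1
    exact sum_congr rfl fun a _ => by rw [add_comm]; exact_mod_cast hg.nat_mul k a

theorem Finset.sum_range_two_mul {M : Type*} [AddCommMonoid M] (f : ℕ → M) (h : ℕ) :
    ∑ x ∈ range (2 * h), f x = ∑ a ∈ range h, f (2 * a) + ∑ a ∈ range h, f (2 * a + 1) := by
  induction h with
  | zero => simp
  | succ h ih =>
    rw [Nat.mul_succ, sum_range_add, ih, sum_range_succ, sum_range_succ (fun a => f (2 * a + 1))]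
    simp only [sum_range_succ, sum_range_zero, zero_add, add_zero]
    abel

theorem Finset.sum_sum_sum_range_mul_of_periodic {M : Type*} [AddCommMonoid M]
    {F : ℕ → ℕ → ℕ → M} {m : ℕ} (h₁ : ∀ y z, Periodic (F · y z) m)
    (h₂ : ∀ x z, Periodic (F x · z) m) (h₃ : ∀ x y, Periodic (F x y ·) m) (k₁ k₂ k₃ : ℕ) :
    ∑ x ∈ range (k₁ * m), ∑ y ∈ range (k₂ * m), ∑ z ∈ range (k₃ * m), F x y z =
      (k₁ * k₂ * k₃) • ∑ x ∈ range m, ∑ y ∈ range m, ∑ z ∈ range m, F x y z := by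
  simp_rw [(h₃ _ _).sum_range_mul]
  have h₂' : ∀ x, Periodic (fun y => k₃ • ∑ z ∈ range m, F x y z) m :=
    fun x y => by simp only [(h₂ x _) y]
  simp_rw [(h₂' _).sum_range_mul]
  have h₁' : Periodic (fun x => k₂ • ∑ y ∈ range m, k₃ • ∑ z ∈ range m, F x y z) m :=
    fun x => by simp only [(h₁ _ _) x]
  rw [h₁'.sum_range_mul]
  simp only [← smul_sum, smul_smul]
  ring_nf

theorem ZMod.sum_eq_sum_range {M : Type*} [AddCommMonoid M] (q : ℕ) [NeZero q] (f : ZMod q → M) :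
    ∑ x : ZMod q, f x = ∑ y ∈ range q, f y :=
  sum_nbij' ZMod.val Nat.cast (fun x _ => mem_range.mpr (ZMod.val_lt x)) (fun _ _ => mem_univ _)
    (fun x _ => ZMod.natCast_zmod_val x) (fun _ hy => ZMod.val_cast_of_lt (mem_range.mp hy))
    (fun x _ => by rw [ZMod.natCast_zmod_val])

theorem tendsto_zero_of_add_eq_mul {R : Type*} [SeminormedRing R] {e : ℕ → R} {k : ℕ} {q : R}
    (hk : k ≠ 0) (hq : ‖q‖ < 1) (he : ∀ n, e (n + k) = q * e n) : Tendsto e atTop (nhds 0) := by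
  have hiter : ∀ m j, e (j + m * k) = q ^ m * e j := by
    intro m j
    induction m with
    | zero => simp
    | succ m ih => rw [Nat.succ_mul, ← add_assoc, he, ih, pow_succ', mul_assoc]
  have hpow : Tendsto (fun n => q ^ (n / k)) atTop (nhds 0) :=
    (tendsto_pow_atTop_nhds_zero_of_norm_lt_one hq).comp (Nat.tendsto_div_const_atTop hk)
  have hbdd : IsBoundedUnder (· ≤ ·) atTop (fun n => ‖e (n % k)‖) :=
    isBoundedUnder_of ⟨∑ j ∈ range k, ‖e j‖, fun n => single_le_sum
      (fun j _ => norm_nonneg (e j)) (mem_range.mpr (Nat.mod_lt n (Nat.pos_of_ne_zero hk)))⟩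
  refine (hpow.zero_mul_isBoundedUnder_le hbdd).congr fun n => ?_
  rw [← hiter, Nat.mod_add_div']

def linCongrCount (Q s t : ℕ) : ℕ := #{x ∈ range Q | x * s ≡ t [MOD Q]}

theorem linCongrCount_congr {Q s s' t t' : ℕ} (hs : s ≡ s' [MOD Q]) (ht : t ≡ t' [MOD Q]) :
    linCongrCount Q s t = linCongrCount Q s' t' := by
  unfold linCongrCount
  congr 1
  exact filter_congr fun x _ => ⟨fun h => ((hs.mul_left x).symm.trans h).trans ht,
    fun h => ((hs.mul_left x).trans h).trans ht.symm⟩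

theorem linCongrCount_eq_one_of_coprime {Q s : ℕ} (hQ : 0 < Q) (hs : s.Coprime Q) (t : ℕ) :
    linCongrCount Q s t = 1 := by
  obtain ⟨v, hv⟩ : ∃ v, s * v ≡ 1 [MOD Q] := by
    rcases Nat.lt_or_ge 1 Q with hQ1 | hQ1
    · obtain ⟨v, -, hv⟩ := Nat.exists_mul_mod_eq_one_of_coprime hs hQ1
      exact ⟨v, hv.trans (Nat.mod_eq_of_lt hQ1).symm⟩
    · exact ⟨0, by simp [Nat.ModEq, Nat.le_antisymm hQ1 hQ]⟩
  refine card_eq_one.mpr ⟨t * v % Q, ext fun x => ?_⟩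
  simp only [mem_filter, mem_range, mem_singleton]
  constructor
  · rintro ⟨hx, h⟩
    rw [← Nat.mod_eq_of_lt hx]
    calc x = x * 1 := (mul_one x).symm
      _ ≡ x * (s * v) [MOD Q] := hv.symm.mul_left x
      _ = x * s * v := (mul_assoc x s v).symm
      _ ≡ t * v [MOD Q] := h.mul_right v
  · rintro rfl
    refine ⟨Nat.mod_lt _ hQ, ?_⟩
    calc t * v % Q * s ≡ t * v * s [MOD Q] := (Nat.mod_modEq _ Q).mul_right s
      _ = t * (s * v) := by ring
      _ ≡ t * 1 [MOD Q] := hv.mul_left t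
      _ = t := mul_one t

theorem linCongrCount_mul_left {d : ℕ} (hd : d ≠ 0) (Q s t : ℕ) :
    linCongrCount (d * Q) (d * s) (d * t) = d * linCongrCount Q s t := by
  have hcancel : ∀ x, x * (d * s) ≡ d * t [MOD d * Q] ↔ x % Q * s ≡ t [MOD Q] := fun x => by
    rw [mul_left_comm, Nat.ModEq.mul_left_cancel_iff' hd]
    exact ⟨((Nat.mod_modEq x Q).mul_right s).trans, ((Nat.mod_modEq x Q).mul_right s).symm.trans⟩
  unfold linCongrCount
  have hper : Periodic (fun x => if x % Q * s ≡ t [MOD Q] then 1 else 0) Q := fun x => by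
    simp only [Nat.add_mod_right]
  rw [filter_congr fun x _ => hcancel x, card_filter, card_filter, hper.sum_range_mul, smul_eq_mul]
  exact congrArg _ (sum_congr rfl fun x hx => by rw [Nat.mod_eq_of_lt (mem_range.mp hx)])

theorem linCongrCount_eq_zero_of_not_dvd {Q s t d : ℕ} (hQ : d ∣ Q) (hs : d ∣ s) (ht : ¬ d ∣ t) :
    linCongrCount Q s t = 0 := by
  refine card_eq_zero.mpr (filter_eq_empty_iff.mpr fun x _ h => ht ?_)
  exact (h.dvd_iff hQ).mp (dvd_mul_of_dvd_right hs x)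

theorem linCongrCount_two_pow_of_odd {s : ℕ} (hs : Odd s) (k t : ℕ) :
    linCongrCount (2 ^ k) s t = 1 :=
  linCongrCount_eq_one_of_coprime (by positivity) ((Nat.coprime_two_right.mpr hs).pow_right k) t

theorem linCongrCount_two_pow_succ_two_mul {u : ℕ} (hu : Odd u) (k t : ℕ) :
    linCongrCount (2 ^ (k + 1)) (2 * u) t = if 2 ∣ t then 2 else 0 := by
  split_ifs with ht
  · obtain ⟨t', rfl⟩ := ht
    rw [pow_succ', linCongrCount_mul_left two_ne_zero, linCongrCount_two_pow_of_odd hu]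
  · exact linCongrCount_eq_zero_of_not_dvd (dvd_pow_self 2 k.succ_ne_zero) (dvd_mul_right 2 u) ht

def solCount (c n : ℕ) : ℕ :=
  ∑ x₁ ∈ range (2 ^ n), ∑ x₂ ∈ range (2 ^ n), ∑ x₃ ∈ range (2 ^ n),
    linCongrCount (2 ^ n) (x₁ ^ 2 + x₂ ^ 2) (c * x₃ ^ 3)

theorem solCount_add_two (c n : ℕ) :
    solCount c (n + 2) = 2 ^ (3 * n + 5) +
      2 ^ (2 * n + 2) * ∑ x₃ ∈ range (2 ^ (n + 2)), (if 2 ∣ c * x₃ ^ 3 then 2 else 0) +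
      ∑ a ∈ range (2 ^ (n + 1)), ∑ b ∈ range (2 ^ (n + 1)), ∑ x₃ ∈ range (2 ^ (n + 2)),
        linCongrCount (2 ^ (n + 2)) (4 * (a ^ 2 + b ^ 2)) (c * x₃ ^ 3) := by
  obtain ⟨G, hG⟩ : ∃ G : ℕ → ℕ → ℕ, G = fun x₁ x₂ =>
      ∑ x₃ ∈ range (2 ^ (n + 2)), linCongrCount (2 ^ (n + 2)) (x₁ ^ 2 + x₂ ^ 2) (c * x₃ ^ 3) :=
    ⟨_, rfl⟩
  have hmixed : ∀ {x₁ x₂}, Odd (x₁ ^ 2 + x₂ ^ 2) → G x₁ x₂ = 2 ^ (n + 2) := fun h => by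
    simp [hG, linCongrCount_two_pow_of_odd h]
  have hEO : ∀ a b, G (2 * a) (2 * b + 1) = 2 ^ (n + 2) :=
    fun a b => hmixed ⟨2 * a ^ 2 + 2 * b ^ 2 + 2 * b, by ring⟩
  have hOE : ∀ a b, G (2 * a + 1) (2 * b) = 2 ^ (n + 2) :=
    fun a b => hmixed ⟨2 * a ^ 2 + 2 * a + 2 * b ^ 2, by ring⟩
  have hOO : ∀ a b, G (2 * a + 1) (2 * b + 1) =
      ∑ x₃ ∈ range (2 ^ (n + 2)), (if 2 ∣ c * x₃ ^ 3 then 2 else 0) := fun a b => by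
    have hsq : (2 * a + 1) ^ 2 + (2 * b + 1) ^ 2 = 2 * (2 * (a ^ 2 + a + b ^ 2 + b) + 1) := by ring
    simp only [hG, hsq, linCongrCount_two_pow_succ_two_mul (odd_two_mul_add_one _)]
  have hEE : ∀ a b, G (2 * a) (2 * b) =
      ∑ x₃ ∈ range (2 ^ (n + 2)), linCongrCount (2 ^ (n + 2)) (4 * (a ^ 2 + b ^ 2)) (c * x₃ ^ 3) :=
    fun a b => by simp only [hG]; ring_nf
  have hsplit : solCount c (n + 2) =
      ∑ x₁ ∈ range (2 * 2 ^ (n + 1)), ∑ x₂ ∈ range (2 * 2 ^ (n + 1)), G x₁ x₂ := by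
    rw [hG, ← pow_succ']
    rfl
  rw [hsplit]
  simp only [sum_range_two_mul, sum_add_distrib, hEO, hOE, hOO, hEE, sum_const, card_range,
    smul_eq_mul]
  ring

theorem sum_linCongrCount_range_mul (c n k₁ k₂ k₃ : ℕ) :
    ∑ x₁ ∈ range (k₁ * 2 ^ n), ∑ x₂ ∈ range (k₂ * 2 ^ n), ∑ x₃ ∈ range (k₃ * 2 ^ n),
      linCongrCount (2 ^ n) (x₁ ^ 2 + x₂ ^ 2) (c * x₃ ^ 3) = k₁ * k₂ * k₃ * solCount c n := by
  have hper : ∀ x, x + 2 ^ n ≡ x [MOD 2 ^ n] := fun x => Nat.add_modulus_modEq_iff.mpr rfl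
  rw [sum_sum_sum_range_mul_of_periodic
    (F := fun x₁ x₂ x₃ => linCongrCount (2 ^ n) (x₁ ^ 2 + x₂ ^ 2) (c * x₃ ^ 3))
    (fun _ _ x => linCongrCount_congr (((hper x).pow 2).add_right _) rfl)
    (fun _ _ x => linCongrCount_congr (((hper x).pow 2).add_left _) rfl)
    (fun _ _ x => linCongrCount_congr rfl (((hper x).pow 3).mul_left _)), smul_eq_mul]
  rfl

theorem solCount_four_add_two (n : ℕ) :
    solCount 4 (n + 2) = 2 ^ (3 * n + 6) + 64 * solCount 1 n := by
  have hEE : ∀ a b x₃ : ℕ, linCongrCount (2 ^ (n + 2)) (4 * (a ^ 2 + b ^ 2)) (4 * x₃ ^ 3) =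
      4 * linCongrCount (2 ^ n) (a ^ 2 + b ^ 2) (1 * x₃ ^ 3) := fun a b x₃ => by
    rw [pow_add, mul_comm, one_mul]
    exact linCongrCount_mul_left four_ne_zero _ _ _
  have hOO : ∀ x₃ : ℕ, 2 ∣ 4 * x₃ ^ 3 := fun x₃ => dvd_mul_of_dvd_left (by norm_num) _
  rw [solCount_add_two]
  simp only [hEE, hOO, if_true, ← mul_sum, sum_const, card_range, smul_eq_mul]
  rw [show 2 ^ (n + 1) = 2 * 2 ^ n by ring, show 2 ^ (n + 2) = 4 * 2 ^ n by ring,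
    sum_linCongrCount_range_mul]
  ring

theorem sum_linCongrCount_four_mul_of_not_four_dvd {c : ℕ} (hc : ¬ 4 ∣ c) (n : ℕ) :
    ∑ a ∈ range (2 ^ (n + 1)), ∑ b ∈ range (2 ^ (n + 1)), ∑ x₃ ∈ range (2 ^ (n + 2)),
      linCongrCount (2 ^ (n + 2)) (4 * (a ^ 2 + b ^ 2)) (c * x₃ ^ 3) = 32 * solCount (2 * c) n := by
  have h4 : 2 ^ (n + 2) = 4 * 2 ^ n := by ring
  have hodd : ∀ a b y : ℕ,
      linCongrCount (2 ^ (n + 2)) (4 * (a ^ 2 + b ^ 2)) (c * (2 * y + 1) ^ 3) = 0 := fun a b y => by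
    have hcop : Nat.Coprime 4 ((2 * y + 1) ^ 3) :=
      .pow_right 3 (.pow_left 2 (Nat.coprime_two_left.mpr (odd_two_mul_add_one y)))
    exact linCongrCount_eq_zero_of_not_dvd (h4 ▸ dvd_mul_right 4 _) (dvd_mul_right 4 _)
      fun h => hc (hcop.dvd_of_dvd_mul_right h)
  have heven : ∀ a b y : ℕ, linCongrCount (2 ^ (n + 2)) (4 * (a ^ 2 + b ^ 2)) (c * (2 * y) ^ 3) =
      4 * linCongrCount (2 ^ n) (a ^ 2 + b ^ 2) (2 * c * y ^ 3) := fun a b y => by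
    rw [h4, show c * (2 * y) ^ 3 = 4 * (2 * c * y ^ 3) by ring]
    exact linCongrCount_mul_left four_ne_zero _ _ _
  have hx₃ : ∀ a b : ℕ, ∑ x₃ ∈ range (2 ^ (n + 2)),
      linCongrCount (2 ^ (n + 2)) (4 * (a ^ 2 + b ^ 2)) (c * x₃ ^ 3) =
        4 * ∑ y ∈ range (2 ^ (n + 1)), linCongrCount (2 ^ n) (a ^ 2 + b ^ 2) (2 * c * y ^ 3) := by
    intro a b
    rw [congrArg range (pow_succ' 2 (n + 1)), sum_range_two_mul]
    simp only [heven, hodd, sum_const_zero, add_zero, mul_sum]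
  simp only [hx₃, ← mul_sum]
  rw [show 2 ^ (n + 1) = 2 * 2 ^ n by ring, sum_linCongrCount_range_mul]
  ring

theorem solCount_two_add_two (n : ℕ) :
    solCount 2 (n + 2) = 2 ^ (3 * n + 6) + 32 * solCount 4 n := by
  have hOO : ∀ x₃ : ℕ, 2 ∣ 2 * x₃ ^ 3 := fun x₃ => dvd_mul_right 2 _
  rw [solCount_add_two, sum_linCongrCount_four_mul_of_not_four_dvd (by norm_num)]
  simp only [hOO, if_true, sum_const, card_range, smul_eq_mul]
  ring

theorem solCount_one_add_two (n : ℕ) :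
    solCount 1 (n + 2) = 3 * 2 ^ (3 * n + 4) + 32 * solCount 2 n := by
  have hOO : ∑ x₃ ∈ range (2 ^ (n + 2)), (if 2 ∣ 1 * x₃ ^ 3 then 2 else 0) = 2 ^ (n + 2) := by
    have heven : ∀ y : ℕ, 2 ∣ 1 * (2 * y) ^ 3 := fun y => ⟨4 * y ^ 3, by ring⟩
    have hodd : ∀ y : ℕ, ¬ 2 ∣ 1 * (2 * y + 1) ^ 3 := fun y => by
      rw [one_mul, ← even_iff_two_dvd, Nat.not_even_iff_odd]
      exact (odd_two_mul_add_one y).pow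
    rw [congrArg range (pow_succ' 2 (n + 1)), sum_range_two_mul]
    simp only [heven, hodd, if_true, if_false, sum_const, card_range, smul_eq_mul]
    ring
  rw [solCount_add_two, sum_linCongrCount_four_mul_of_not_four_dvd (by norm_num), hOO]
  ring

theorem N2_eq_solCount_one (n : ℕ) : N2 n = solCount 1 n := by
  classical
  rw [N2, Nat.card_eq_fintype_card, Fintype.card_subtype, card_filter]
  simp only [Fintype.sum_prod_type, ZMod.sum_eq_sum_range]
  rw [sum_comm]
  refine sum_congr rfl fun x₁ _ => ?_
  rw [sum_comm]
  refine sum_congr rfl fun x₂ _ => ?_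
  rw [sum_comm]
  refine sum_congr rfl fun x₃ _ => ?_
  rw [linCongrCount, card_filter]
  refine sum_congr rfl fun x₀ _ => ?_
  refine if_congr ?_ rfl rfl
  rw [one_mul, ← ZMod.natCast_eq_natCast_iff]
  push_cast
  rfl

theorem N2_add_six (n : ℕ) : N2 (n + 6) = 3 * 2 ^ (3 * n + 17) + 2 ^ 16 * N2 n := by
  rw [N2_eq_solCount_one, N2_eq_solCount_one, solCount_one_add_two, solCount_two_add_two,
    solCount_four_add_two]
  ring

/-- The 2-adic density: `N(2ⁿ)/2^{3n} → 2` as `n → ∞`. -/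
theorem two_adic_density :
    Tendsto (fun n : ℕ => (N2 n : ℝ) / 2 ^ (3 * n)) atTop (nhds 2) := by
  rw [← tendsto_sub_nhds_zero_iff]
  refine tendsto_zero_of_add_eq_mul (k := 6) (q := 1 / 4) (by norm_num) (by norm_num) fun n => ?_
  rw [N2_add_six]
  push_cast
  field_simp
  ring
end

section
/- Let n ≥ 1 and k' ≥ 0 be integers with 2k' + 1 < n, and let v₂ denote the 2-adic valuation. Then #{(x₁,x₂) ∈ ℤ² : 0 ≤ x₁, x₂ < 2ⁿ and v₂(x₁² + x₂²) = 2k' + 1} = 2^{2n − 2k' − 2}. -/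
/-!
Write `x = 2^a u`, `y = 2^b v` with `u, v` odd and `a ≤ b`. Then
`x² + y² = 2^{2a} (u² + 4^{b-a} v²)`, and the bracket is odd if `a < b`, while `u² + v² ≡ 2 mod 4`.
So `v₂(x² + y²)` is odd exactly when `v₂(x) = v₂(y)`, and then equals `2 v₂(x) + 1`. The pairs
counted are therefore those with `x, y ∈ {2^{k'} (2j + 1) : j < 2^{n-k'-1}}`.
-/

theorem Int.exists_eq_two_pow_mul_odd {x : ℤ} (hx : x ≠ 0) :
    ∃ (a : ℕ) (u : ℤ), Odd u ∧ x = 2 ^ a * u := by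
  obtain ⟨u, hxu, hu⟩ :=
    (Int.finiteMultiplicity_iff (a := 2).2 ⟨by decide, hx⟩).exists_eq_pow_mul_and_not_dvd
  exact ⟨_, u, Int.not_even_iff_odd.1 (even_iff_two_dvd.not.2 hu), hxu⟩

theorem Int.ne_zero_of_odd {u : ℤ} (hu : Odd u) : u ≠ 0 := by
  rintro rfl
  simp at hu

section

variable {p : ℕ} [Fact p.Prime]

theorem padicValInt_pow_mul {m : ℤ} (hm : m ≠ 0) (a : ℕ) :
    padicValInt p (p ^ a * m) = a + padicValInt p m := by
  rw [padicValInt.mul (pow_ne_zero _ (Nat.cast_ne_zero.2 (Fact.out : p.Prime).ne_zero)) hm,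
    ← Nat.cast_pow, padicValInt.of_nat, padicValNat.prime_pow]

theorem padicValInt_sq (y : ℤ) : padicValInt p (y ^ 2) = 2 * padicValInt p y := by
  rcases eq_or_ne y 0 with rfl | hy
  · simp
  · rw [sq, padicValInt.mul hy hy, two_mul]

end

theorem padicValInt_two_pow_mul {m : ℤ} (hm : m ≠ 0) (a : ℕ) :
    padicValInt 2 (2 ^ a * m) = a + padicValInt 2 m := by
  simpa using padicValInt_pow_mul (p := 2) hm a

theorem padicValInt_two_eq_zero_of_odd {u : ℤ} (hu : Odd u) : padicValInt 2 u = 0 :=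
  padicValInt.eq_zero_of_not_dvd (by simpa [← even_iff_two_dvd] using hu)

theorem padicValInt_two_sq_add_sq_of_odd {u v : ℤ} (hu : Odd u) (hv : Odd v) :
    padicValInt 2 (u ^ 2 + v ^ 2) = 1 := by
  obtain ⟨a, rfl⟩ := hu
  obtain ⟨b, rfl⟩ := hv
  have h : (2 * a + 1) ^ 2 + (2 * b + 1) ^ 2 = 2 ^ 1 * (2 * (a ^ 2 + a + b ^ 2 + b) + 1) := by
    ring
  have hodd := odd_two_mul_add_one (a ^ 2 + a + b ^ 2 + b)
  rw [h, padicValInt_two_pow_mul (Int.ne_zero_of_odd hodd), padicValInt_two_eq_zero_of_odd hodd]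

theorem padicValInt_two_sq_add_sq_eq_two_mul_add_one_iff {a b : ℕ} {u v : ℤ} (hu : Odd u)
    (hv : Odd v) (k : ℕ) :
    padicValInt 2 ((2 ^ a * u) ^ 2 + (2 ^ b * v) ^ 2) = 2 * k + 1 ↔ a = k ∧ b = k := by
  wlog hab : a ≤ b generalizing a b u v
  · rw [add_comm, and_comm]
    exact this hv hu (le_of_not_ge hab)
  obtain ⟨c, rfl⟩ := Nat.exists_eq_add_of_le hab
  have hsplit : (2 ^ a * u) ^ 2 + (2 ^ (a + c) * v) ^ 2 =
      2 ^ (2 * a) * (u ^ 2 + (2 ^ c * v) ^ 2) := by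
    ring
  have hu0 := Int.ne_zero_of_odd hu
  rw [hsplit, padicValInt_two_pow_mul (by positivity)]
  rcases Nat.eq_zero_or_pos c with rfl | hc
  · rw [pow_zero, one_mul, padicValInt_two_sq_add_sq_of_odd hu hv]
    omega
  · have hodd : Odd (u ^ 2 + (2 ^ c * v) ^ 2) :=
      hu.pow.add_even <|
        (Int.even_pow' two_ne_zero).2 ((even_two.pow_of_ne_zero hc.ne').mul_right v)
    rw [padicValInt_two_eq_zero_of_odd hodd]
    omega

theorem sq_add_sq_ne_zero_and_padicValInt_two_eq_iff (k : ℕ) (x y : ℤ) :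
    (x ^ 2 + y ^ 2 ≠ 0 ∧ padicValInt 2 (x ^ 2 + y ^ 2) = 2 * k + 1) ↔
      (∃ u, Odd u ∧ x = 2 ^ k * u) ∧ (∃ v, Odd v ∧ y = 2 ^ k * v) := by
  constructor
  · rintro ⟨hne, hval⟩
    have hx : x ≠ 0 := by
      rintro rfl
      rw [zero_pow two_ne_zero, zero_add, padicValInt_sq] at hval
      omega
    have hy : y ≠ 0 := by
      rintro rfl
      rw [zero_pow two_ne_zero, add_zero, padicValInt_sq] at hval
      omega
    obtain ⟨a, u, hu, rfl⟩ := Int.exists_eq_two_pow_mul_odd hx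
    obtain ⟨b, v, hv, rfl⟩ := Int.exists_eq_two_pow_mul_odd hy
    obtain ⟨rfl, rfl⟩ := (padicValInt_two_sq_add_sq_eq_two_mul_add_one_iff hu hv k).1 hval
    exact ⟨⟨u, hu, rfl⟩, ⟨v, hv, rfl⟩⟩
  · rintro ⟨⟨u, hu, rfl⟩, ⟨v, hv, rfl⟩⟩
    have hu0 := Int.ne_zero_of_odd hu
    exact ⟨by positivity, (padicValInt_two_sq_add_sq_eq_two_mul_add_one_iff hu hv k).2 ⟨rfl, rfl⟩⟩

theorem ncard_two_pow_mul_odd_lt_two_pow {k n : ℕ} (hkn : k < n) :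
    {x : ℤ | 0 ≤ x ∧ x < 2 ^ n ∧ ∃ u, Odd u ∧ x = 2 ^ k * u}.ncard = 2 ^ (n - k - 1) := by
  obtain ⟨m, rfl⟩ := Nat.exists_eq_add_of_lt hkn
  have hk : (0 : ℤ) < 2 ^ k := by positivity
  have hset : {x : ℤ | 0 ≤ x ∧ x < 2 ^ (k + m + 1) ∧ ∃ u, Odd u ∧ x = 2 ^ k * u} =
      (Finset.range (2 ^ m)).image (fun j : ℕ => (2 ^ k * (2 * j + 1) : ℤ)) := by
    ext x
    simp only [Set.mem_ofPred_eq, Finset.coe_image, Finset.coe_range, Set.mem_image, Set.mem_Iio]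
    have hpow : (2 : ℤ) ^ (k + m + 1) = 2 ^ k * (2 * 2 ^ m) := by ring
    constructor
    · rintro ⟨hx0, hxn, u, ⟨t, rfl⟩, rfl⟩
      have ht0 : 0 ≤ 2 * t + 1 := nonneg_of_mul_nonneg_right hx0 hk
      have htm : 2 * t + 1 < 2 * 2 ^ m := lt_of_mul_lt_mul_left (hpow ▸ hxn) hk.le
      lift t to ℕ using by omega
      exact ⟨t, by exact_mod_cast (by omega : (t : ℤ) < 2 ^ m), rfl⟩
    · rintro ⟨j, hj, rfl⟩
      have hj' : (j : ℤ) < 2 ^ m := by exact_mod_cast hj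
      exact ⟨by positivity, hpow ▸ mul_lt_mul_of_pos_left (by omega) hk, _,
        odd_two_mul_add_one _, rfl⟩
  rw [hset, Set.ncard_coe_finset, Finset.card_image_of_injective, Finset.card_range]
  · congr 1
    omega
  · intro i j hij
    have := mul_left_cancel₀ hk.ne' hij
    omega

theorem count_odd_two_adic_valuation_general (n k' : ℕ) (h : 2 * k' + 1 < n) :
    Set.ncard {x : ℤ × ℤ |
        0 ≤ x.1 ∧ x.1 < 2 ^ n ∧ 0 ≤ x.2 ∧ x.2 < 2 ^ n ∧
        x.1 ^ 2 + x.2 ^ 2 ≠ 0 ∧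
        padicValInt 2 (x.1 ^ 2 + x.2 ^ 2) = 2 * k' + 1} = 2 ^ (2 * n - 2 * k' - 2) := by
  set A := {x : ℤ | 0 ≤ x ∧ x < 2 ^ n ∧ ∃ u, Odd u ∧ x = 2 ^ k' * u}
  convert_to (A ×ˢ A).ncard = _ using 2
  · ext ⟨x, y⟩
    simp only [Set.mem_ofPred_eq, Set.mem_prod, A]
    have := sq_add_sq_ne_zero_and_padicValInt_two_eq_iff k' x y
    grind
  rw [Set.ncard_prod, ncard_two_pow_mul_odd_lt_two_pow (by omega), ← pow_add]
  congr 1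
  omega

/-- The number of pairs `(x₁,x₂)` of residues modulo `2ⁿ` with
`v₂(x₁²+x₂²) = 2k'+1` equals `2^{2n-2k'-2}`, provided `2k'+1 < n`. -/
theorem count_odd_two_adic_valuation (n k' : ℕ) (hn : 1 ≤ n) (h : 2 * k' + 1 < n) :
    Set.ncard {x : ℤ × ℤ |
        0 ≤ x.1 ∧ x.1 < 2 ^ n ∧ 0 ≤ x.2 ∧ x.2 < 2 ^ n ∧
        x.1 ^ 2 + x.2 ^ 2 ≠ 0 ∧
        padicValInt 2 (x.1 ^ 2 + x.2 ^ 2) = 2 * k' + 1} = 2 ^ (2 * n - 2 * k' - 2) :=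
  count_odd_two_adic_valuation_general n k' h
end

section
/- Let n ≥ 1 and k' ≥ 0 be integers with 2k' < n, and let v₂ denote the 2-adic valuation. Then #{(x₁,x₂) ∈ ℤ² : 0 ≤ x₁, x₂ < 2ⁿ and v₂(x₁² + x₂²) = 2k'} = 2^{2n − 2k' − 1}. -/
/-!
If `2^(2k)` divides `x² + y²`, then `2^k` divides both `x` and `y`, since a sum of two squares
is divisible by 4 only when both are even. Writing `x = 2^k u`, `y = 2^k w`, the condition
`v₂(x² + y²) = 2k` becomes `u² + w²` odd, i.e. exactly one of `u`, `w` is odd. So the pairs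
counted are those with one coordinate of valuation exactly `k` and the other divisible by
`2^(k+1)`; each kind has `2^(n-k-1)` representatives in `[0, 2^n)`, giving
`2 · 2^(n-k-1) · 2^(n-k-1)` pairs.
-/

open Finset

theorem padicValInt_eq_iff_pow_dvd {p : ℕ} [Fact p.Prime] (m : ℕ) (a : ℤ) :
    (a ≠ 0 ∧ padicValInt p a = m) ↔ (p : ℤ) ^ m ∣ a ∧ ¬ (p : ℤ) ^ (m + 1) ∣ a := by
  rw [padicValInt_dvd_iff, padicValInt_dvd_iff]
  omega

theorem Int.card_filter_dvd_Ico_zero_mul {r : ℤ} (hr : 0 < r) (m : ℕ) :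
    #{x ∈ Ico 0 (r * m) | r ∣ x} = m := by
  rw [Int.Ico_filter_dvd_eq _ _ hr, card_map]
  simp [hr.ne']

theorem card_filter_two_pow_dvd_Ico {j n : ℕ} (hjn : j ≤ n) :
    #{x ∈ Ico (0 : ℤ) (2 ^ n) | 2 ^ j ∣ x} = 2 ^ (n - j) := by
  have h : (2 : ℤ) ^ n = 2 ^ j * ((2 ^ (n - j) : ℕ) : ℤ) := by
    rw [Nat.cast_pow, Nat.cast_ofNat, ← pow_add, Nat.add_sub_cancel' hjn]
  rw [h, Int.card_filter_dvd_Ico_zero_mul (by positivity)]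

theorem card_filter_exact_two_pow_dvd_Ico {k n : ℕ} (hkn : k < n) :
    #{x ∈ Ico (0 : ℤ) (2 ^ n) | 2 ^ k ∣ x ∧ ¬ 2 ^ (k + 1) ∣ x} = 2 ^ (n - k - 1) := by
  have hsub :
      {x ∈ Ico (0 : ℤ) (2 ^ n) | 2 ^ (k + 1) ∣ x} ⊆ {x ∈ Ico (0 : ℤ) (2 ^ n) | 2 ^ k ∣ x} :=
    monotone_filter_right _ fun _ _ => (pow_dvd_pow 2 (k.le_add_right 1)).trans
  rw [filter_and_not, card_sdiff_of_subset hsub, card_filter_two_pow_dvd_Ico hkn.le,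
    card_filter_two_pow_dvd_Ico (j := k + 1) hkn, Nat.sub_sub,
    show n - k = n - (k + 1) + 1 by omega, pow_succ]
  omega

theorem two_dvd_sq_add_sq_iff (u v : ℤ) : 2 ∣ u ^ 2 + v ^ 2 ↔ (2 ∣ u ↔ 2 ∣ v) := by
  simp only [← even_iff_two_dvd, Int.even_add, Int.even_pow, ne_eq, two_ne_zero,
    not_false_eq_true, and_true]

theorem two_dvd_of_four_dvd_sq_add_sq {x y : ℤ} (h : 4 ∣ x ^ 2 + y ^ 2) : 2 ∣ x ∧ 2 ∣ y := by
  have hxy := (two_dvd_sq_add_sq_iff x y).mp (dvd_trans (by norm_num) h)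
  by_contra hodd
  have hx : Odd x := Int.not_even_iff_odd.mp (by rw [even_iff_two_dvd]; tauto)
  have hy : Odd y := Int.not_even_iff_odd.mp (by rw [even_iff_two_dvd]; tauto)
  have := Int.sq_mod_four_eq_one_of_odd hx
  have := Int.sq_mod_four_eq_one_of_odd hy
  omega

theorem two_pow_dvd_of_two_pow_two_mul_dvd_sq_add_sq (j : ℕ) {x y : ℤ}
    (h : 2 ^ (2 * j) ∣ x ^ 2 + y ^ 2) : 2 ^ j ∣ x ∧ 2 ^ j ∣ y := by
  induction j generalizing x y with
  | zero => simp
  | succ j ih =>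
    have h4 : (4 : ℤ) ∣ x ^ 2 + y ^ 2 :=
      (pow_dvd_pow 2 (by omega : 2 ≤ 2 * (j + 1))).trans h
    obtain ⟨⟨a, rfl⟩, ⟨b, rfl⟩⟩ := two_dvd_of_four_dvd_sq_add_sq h4
    have hab : (2 : ℤ) ^ (2 * j) ∣ a ^ 2 + b ^ 2 := by
      rwa [show (2 * a) ^ 2 + (2 * b) ^ 2 = 4 * (a ^ 2 + b ^ 2) by ring,
        show (2 : ℤ) ^ (2 * (j + 1)) = 4 * 2 ^ (2 * j) by ring,
        mul_dvd_mul_iff_left four_ne_zero] at h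
    rw [pow_succ']
    exact ⟨mul_dvd_mul_left 2 (ih hab).1, mul_dvd_mul_left 2 (ih hab).2⟩

theorem not_two_pow_dvd_sq_add_sq_iff {k : ℕ} {x y : ℤ} (hx : 2 ^ k ∣ x) (hy : 2 ^ k ∣ y) :
    ¬ 2 ^ (2 * k + 1) ∣ x ^ 2 + y ^ 2 ↔ (2 ^ (k + 1) ∣ x ↔ ¬ 2 ^ (k + 1) ∣ y) := by
  obtain ⟨u, rfl⟩ := hx
  obtain ⟨v, rfl⟩ := hy
  have hk : (2 : ℤ) ^ k ≠ 0 := by positivity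
  rw [show (2 ^ k * u) ^ 2 + (2 ^ k * v) ^ 2 = 2 ^ (2 * k) * (u ^ 2 + v ^ 2) by ring,
    pow_succ, mul_dvd_mul_iff_left (by positivity), two_dvd_sq_add_sq_iff, pow_succ,
    mul_dvd_mul_iff_left hk, mul_dvd_mul_iff_left hk]
  tauto

theorem two_pow_exact_dvd_sq_add_sq_iff (k : ℕ) (x y : ℤ) :
    (2 ^ (2 * k) ∣ x ^ 2 + y ^ 2 ∧ ¬ 2 ^ (2 * k + 1) ∣ x ^ 2 + y ^ 2) ↔
      (2 ^ k ∣ x ∧ ¬ 2 ^ (k + 1) ∣ x) ∧ 2 ^ (k + 1) ∣ y ∨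
        2 ^ (k + 1) ∣ x ∧ (2 ^ k ∣ y ∧ ¬ 2 ^ (k + 1) ∣ y) := by
  have hsucc : ∀ z : ℤ, 2 ^ (k + 1) ∣ z → 2 ^ k ∣ z :=
    fun _ => (pow_dvd_pow 2 (k.le_add_right 1)).trans
  constructor
  · rintro ⟨h, h'⟩
    obtain ⟨hx, hy⟩ := two_pow_dvd_of_two_pow_two_mul_dvd_sq_add_sq k h
    have := (not_two_pow_dvd_sq_add_sq_iff hx hy).mp h'
    tauto
  · intro h
    have hx : 2 ^ k ∣ x := by rcases h with ⟨⟨hx, -⟩, -⟩ | ⟨hx, -⟩ <;> [exact hx; exact hsucc x hx]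
    have hy : 2 ^ k ∣ y := by rcases h with ⟨-, hy⟩ | ⟨-, hy, -⟩ <;> [exact hsucc y hy; exact hy]
    refine ⟨?_, (not_two_pow_dvd_sq_add_sq_iff hx hy).mpr (by tauto)⟩
    rw [pow_mul']
    exact dvd_add (pow_dvd_pow_of_dvd hx 2) (pow_dvd_pow_of_dvd hy 2)

theorem count_even_two_adic_valuation_general (n k' : ℕ) (h : 2 * k' < n) :
    Set.ncard {x : ℤ × ℤ |
        0 ≤ x.1 ∧ x.1 < 2 ^ n ∧ 0 ≤ x.2 ∧ x.2 < 2 ^ n ∧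
        x.1 ^ 2 + x.2 ^ 2 ≠ 0 ∧
        padicValInt 2 (x.1 ^ 2 + x.2 ^ 2) = 2 * k'} = 2 ^ (2 * n - 2 * k' - 1) := by
  set E := {x ∈ Ico (0 : ℤ) (2 ^ n) | 2 ^ k' ∣ x ∧ ¬ 2 ^ (k' + 1) ∣ x}
  set M := {x ∈ Ico (0 : ℤ) (2 ^ n) | 2 ^ (k' + 1) ∣ x}
  have hset : {x : ℤ × ℤ |
        0 ≤ x.1 ∧ x.1 < 2 ^ n ∧ 0 ≤ x.2 ∧ x.2 < 2 ^ n ∧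
        x.1 ^ 2 + x.2 ^ 2 ≠ 0 ∧
        padicValInt 2 (x.1 ^ 2 + x.2 ^ 2) = 2 * k'} = ↑(E ×ˢ M ∪ M ×ˢ E) := by
    ext ⟨x, y⟩
    have hval := padicValInt_eq_iff_pow_dvd (p := 2) (2 * k') (x ^ 2 + y ^ 2)
    push_cast at hval
    simp only [Set.mem_ofPred_eq, coe_union, coe_product, Set.mem_union, Set.mem_prod, mem_coe,
      E, M, mem_filter, mem_Ico]
    rw [hval, two_pow_exact_dvd_sq_add_sq_iff]
    tauto
  have hdisj : Disjoint (E ×ˢ M) (M ×ˢ E) :=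
    disjoint_product.mpr (Or.inl (disjoint_filter.mpr fun _ _ hE => hE.2))
  rw [hset, Set.ncard_coe_finset, card_union_of_disjoint hdisj, card_product, card_product,
    card_filter_exact_two_pow_dvd_Ico (by omega), card_filter_two_pow_dvd_Ico (by omega),
    Nat.sub_sub, ← pow_add, ← two_mul, ← pow_succ']
  congr 1
  omega

/-- The number of pairs `(x₁,x₂)` of residues modulo `2ⁿ` with
`v₂(x₁²+x₂²) = 2k'` equals `2^{2n-2k'-1}`, provided `2k' < n`. -/
theorem count_even_two_adic_valuation (n k' : ℕ) (hn : 1 ≤ n) (h : 2 * k' < n) :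
    Set.ncard {x : ℤ × ℤ |
        0 ≤ x.1 ∧ x.1 < 2 ^ n ∧ 0 ≤ x.2 ∧ x.2 < 2 ^ n ∧
        x.1 ^ 2 + x.2 ^ 2 ≠ 0 ∧
        padicValInt 2 (x.1 ^ 2 + x.2 ^ 2) = 2 * k'} = 2 ^ (2 * n - 2 * k' - 1) :=
  count_even_two_adic_valuation_general n k' h
end

section
/- The infinite product τ = ∏_{p prime} (1 − 1/p)⁴ (1 − χ(p)/p)³ (1 + (2 + 3χ(p) + 2χ(p)²)/p + χ(p)²/p²) over all primes p converges (the family of factors is multipliable) and its value is a strictly positive real number. -/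
/-!
The factor at `p` is `tauFactor (χ p) (1/p)`, a polynomial in `x = 1/p` whose coefficient of `x`
is `2c² - 2` for `c = χ(p)`. It vanishes at every odd prime, where `c = ±1`, so the factors are
positive numbers of the form `1 + O(1/p²)`. Hence `∑ log (factor)` converges absolutely and the
product is the exponential of that sum.
-/

open Real

theorem Real.multipliable_and_tprod_pos_of_summable_sub_one {ι : Type*} {f : ι → ℝ}
    (hpos : ∀ i, 0 < f i) (hf : Summable fun i ↦ f i - 1) :
    Multipliable f ∧ 0 < ∏' i, f i := by
  have hlog : Summable fun i ↦ log (f i) :=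
    (summable_log_one_add_of_summable hf).congr fun i ↦ by rw [add_sub_cancel]
  exact ⟨multipliable_of_summable_log hpos hlog,
    rexp_tsum_eq_tprod hpos hlog ▸ exp_pos _⟩

lemma summable_one_div_prime_sq : Summable fun p : Nat.Primes ↦ 1 / (p : ℝ) ^ 2 :=
  (summable_one_div_nat_pow.mpr one_lt_two).comp_injective Nat.Primes.coe_nat_injective

lemma abs_chi_le_one (n : ℕ) : |chi n| ≤ 1 := by
  unfold chi
  split_ifs <;> norm_num

lemma chi_two : chi 2 = 0 := by
  norm_num [chi]

lemma chi_eq_one_or_eq_neg_one_of_odd {n : ℕ} (hn : Odd n) : chi n = 1 ∨ chi n = -1 := by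
  have : n % 4 = 1 ∨ n % 4 = 3 := by
    have := Nat.odd_iff.mp hn
    omega
  rcases this with h | h <;> simp [chi, h]

noncomputable def tauFactor (c x : ℝ) : ℝ :=
  (1 - x) ^ 4 * (1 - c * x) ^ 3 * (1 + (2 + 3 * c + 2 * c ^ 2) * x + c ^ 2 * x ^ 2)

lemma tauFactor_pos {c x : ℝ} (hc : |c| ≤ 1) (hx0 : 0 ≤ x) (hx1 : x < 1) :
    0 < tauFactor c x := by
  obtain ⟨hc₁, hc₂⟩ := abs_le.mp hc
  have hquad : 0 < 2 + 3 * c + 2 * c ^ 2 := by nlinarith [sq_nonneg (4 * c + 3)]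
  have : 0 < 1 + (2 + 3 * c + 2 * c ^ 2) * x + c ^ 2 * x ^ 2 := by positivity
  have : 0 < 1 - c * x := by nlinarith
  have : 0 < 1 - x := by linarith
  unfold tauFactor
  positivity

lemma abs_tauFactor_sub_one_le {c x : ℝ} (hc : c = 1 ∨ c = -1) (hx0 : 0 ≤ x) (hx : x ≤ 1 / 3) :
    |tauFactor c x - 1| ≤ 30 * x ^ 2 := by
  have hx' := sub_nonneg.2 hx
  rw [abs_le]
  rcases hc with rfl | rfl <;> unfold tauFactor <;> constructor <;>
    nlinarith [pow_nonneg hx0 3, pow_nonneg hx0 4, pow_nonneg hx0 5, pow_nonneg hx0 7,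
      mul_nonneg hx0 hx', mul_nonneg (pow_nonneg hx0 2) hx', mul_nonneg (pow_nonneg hx0 3) hx']

lemma abs_tauFactor_chi_sub_one_le (p : Nat.Primes) :
    |tauFactor (chi p) (1 / p) - 1| ≤ 30 * (1 / (p : ℝ) ^ 2) := by
  rcases p.prop.eq_two_or_odd with h2 | hodd
  · rw [h2, chi_two]
    norm_num [tauFactor]
  · have hp3 : (3 : ℝ) ≤ p := by
      have := p.prop.two_le
      exact_mod_cast (show 3 ≤ p.val by omega)
    have hx : 1 / (p : ℝ) ≤ 1 / 3 := one_div_le_one_div_of_le (by norm_num) hp3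
    have hchi := chi_eq_one_or_eq_neg_one_of_odd (Nat.odd_iff.mpr hodd)
    simpa [one_div_pow] using abs_tauFactor_sub_one_le hchi (by positivity) hx

/-- The Euler product `τ` converges and its value is strictly positive. -/
theorem tau_convergent_positive :
    Multipliable (fun p : Nat.Primes =>
      (1 - 1 / (p : ℝ)) ^ 4 * (1 - chi p / (p : ℝ)) ^ 3 *
        (1 + (2 + 3 * chi p + 2 * (chi p) ^ 2) / (p : ℝ) + (chi p) ^ 2 / (p : ℝ) ^ 2)) ∧
    0 < ∏' p : Nat.Primes,
      (1 - 1 / (p : ℝ)) ^ 4 * (1 - chi p / (p : ℝ)) ^ 3 *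
        (1 + (2 + 3 * chi p + 2 * (chi p) ^ 2) / (p : ℝ) + (chi p) ^ 2 / (p : ℝ) ^ 2) := by
  have hfactor : (fun p : Nat.Primes =>
      (1 - 1 / (p : ℝ)) ^ 4 * (1 - chi p / (p : ℝ)) ^ 3 *
        (1 + (2 + 3 * chi p + 2 * (chi p) ^ 2) / (p : ℝ) + (chi p) ^ 2 / (p : ℝ) ^ 2)) =
      fun p : Nat.Primes ↦ tauFactor (chi p) (1 / (p : ℝ)) := by
    funext p
    unfold tauFactor
    ring
  rw [hfactor]
  refine Real.multipliable_and_tprod_pos_of_summable_sub_one (fun p ↦ ?_) ?_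
  · have hp : (1 : ℝ) < p := by exact_mod_cast p.prop.one_lt
    exact tauFactor_pos (abs_chi_le_one p) (by positivity) ((div_lt_one (by linarith)).mpr hp)
  · exact Summable.of_norm_bounded (summable_one_div_prime_sq.mul_left 30)
      abs_tauFactor_chi_sub_one_le
end

section
/- Consider vectors v = (e₁, e₂, e₂', ẽ₁, ẽ₁', ẽ₂, ẽ₂', ẽ₃, ẽ₃') ∈ ℕ⁹ satisfying the linear system: ẽ₃' + ẽ₁ = ẽ₃ + ẽ₁'; ẽ₂' + 2ẽ₃ = ẽ₂ + 2ẽ₃'; e₂ + ẽ₃' = 2ẽ₃; and e₂' + ẽ₃ = 2ẽ₃'. Then v satisfies this system if and only if v is a sum with nonnegative integer coefficients of the six vectors g₁ = (1,0,0,0,0,0,0,0,0), g₂ = (0,0,0,1,1,0,0,0,0), g₃ = (0,0,0,0,0,1,1,0,0), g₄ = (0,1,1,0,0,0,0,1,1), g₅ = (0,3,0,1,0,2,0,2,1) and g₆ = (0,0,3,0,1,0,2,1,2). That is, the submonoid of ℕ⁹ cut out by the system equals the submonoid generated by g₁, …, g₆. -/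
/-!
Put `a = ẽ₃` and `b = ẽ₃'`. The system forces `e₂ = 2a - b`, `e₂' = 2b - a`, `ẽ₁ - ẽ₁' = a - b` and
`ẽ₂ - ẽ₂' = 2(a - b)`. If `b ≤ a`, subtracting `(a - b) g₅` leaves a vector with `ẽ₁ = ẽ₁'`,
`ẽ₂ = ẽ₂'` and `e₂ = e₂' = ẽ₃ = ẽ₃' = 2b - a`, which is visibly a combination of `g₁, g₂, g₃, g₄`;
if `a ≤ b` the same works with `g₆` in place of `g₅`.
-/

def coxCombination (c : Fin 6 → ℕ) : Fin 9 → ℕ :=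
  c 0 • ![1,0,0,0,0,0,0,0,0] + c 1 • ![0,0,0,1,1,0,0,0,0] +
    c 2 • ![0,0,0,0,0,1,1,0,0] + c 3 • ![0,1,1,0,0,0,0,1,1] +
    c 4 • ![0,3,0,1,0,2,0,2,1] + c 5 • ![0,0,3,0,1,0,2,1,2]

theorem eq_coxCombination_iff (v : Fin 9 → ℕ) (c : Fin 6 → ℕ) :
    v = coxCombination c ↔
      v 0 = c 0 ∧ v 1 = c 3 + 3 * c 4 ∧ v 2 = c 3 + 3 * c 5 ∧ v 3 = c 1 + c 4 ∧
      v 4 = c 1 + c 5 ∧ v 5 = c 2 + 2 * c 4 ∧ v 6 = c 2 + 2 * c 5 ∧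
      v 7 = c 3 + 2 * c 4 + c 5 ∧ v 8 = c 3 + c 4 + 2 * c 5 := by
  simp [funext_iff, Fin.forall_fin_succ, coxCombination, mul_comm]

/-- The submonoid of `ℕ⁹` cut out by the linear system arising in the Cox ring computation
is generated by the six vectors `g₁, …, g₆`. Coordinates record the exponents of
`t₁, t₂, t₂', t̃₁, t̃₁', t̃₂, t̃₂', t̃₃, t̃₃'` in this order. -/
theorem cox_ring_monoid (v : Fin 9 → ℕ) :
    (v 8 + v 3 = v 7 + v 4 ∧
     v 6 + 2 * v 7 = v 5 + 2 * v 8 ∧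
     v 1 + v 8 = 2 * v 7 ∧
     v 2 + v 7 = 2 * v 8) ↔
    ∃ c : Fin 6 → ℕ,
      v = c 0 • ![1,0,0,0,0,0,0,0,0] + c 1 • ![0,0,0,1,1,0,0,0,0] +
          c 2 • ![0,0,0,0,0,1,1,0,0] + c 3 • ![0,1,1,0,0,0,0,1,1] +
          c 4 • ![0,3,0,1,0,2,0,2,1] + c 5 • ![0,0,3,0,1,0,2,1,2] := by
  change _ ↔ ∃ c, v = coxCombination c
  simp only [eq_coxCombination_iff]
  constructor
  · rintro ⟨h₁, h₂, h₃, h₄⟩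
    rcases le_total (v 8) (v 7) with h | h
    · refine ⟨![v 0, v 4, v 6, 2 * v 8 - v 7, v 7 - v 8, 0], ?_⟩
      simp only [Matrix.cons_val_zero, Matrix.cons_val_one, Matrix.cons_val, true_and]
      omega
    · refine ⟨![v 0, v 3, v 5, 2 * v 7 - v 8, 0, v 8 - v 7], ?_⟩
      simp only [Matrix.cons_val_zero, Matrix.cons_val_one, Matrix.cons_val, true_and]
      omega
  · rintro ⟨c, -, h₁, h₂, h₃, h₄, h₅, h₆, h₇, h₈⟩
    omega
end
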